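/- Let p and r be positive integers with p > 1. Then Σ_{k=1}^∞ ζ(p,k)/(r+k) = ζ_H(p) + Σ_{j=2}^{p-1} (-1)^{j-1} ζ(p+1-j) H_r^{(j)} + (-1)^{p-1} Σ_{j=1}^r H_j/j^p, where ζ(p,k) = Σ_{n=0}^∞ 1/(n+k)^p is the Hurwitz zeta value. -/

import Mathlib

/-!
Expanding `ζ(p, k+1) = ∑_{m ≥ k} (m+1)^(-p)` turns the left-hand side into a double series of
nonnegative terms indexed by `k ≤ m`; it converges absolutely because `ζ(p, k+1) ≤ 2/(k+1)`.
Summing over `k` first, column `m` contributes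
`(H_{r+m+1} - H_r)/(m+1)^p = H_{m+1}/(m+1)^p + ∑_{i=1}^r (m+1)^(-p) (1/(m+1+i) - 1/i)`.
The first part sums to `ζ_H(p)`. For each `i`, the partial fraction
`x^(-p-1) (1/(x+i) - 1/i) = -(1/i) x^(-p) (1/(x+i) - 1/i) - 1/(i^2 x^p)` lowers `p` one step at a
time, down to the telescoping series `∑_m (1/(m+1) - 1/(m+1+i)) = H_i`.
-/

open Finset

/-- Generalized harmonic number `H_n^(r) = ∑_{k=1}^n 1/k^r`. -/
noncomputable def Hgen (r n : ℕ) : ℝ := ∑ k ∈ Finset.Icc 1 n, (1 : ℝ) / (k : ℝ) ^ r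

/-- Hyperharmonic numbers of non-negative order: `hpos 0 n = 1/n`,
`hpos (r+1) n = ∑_{k=1}^n hpos r k`.  In particular `hpos 1 n = H_n`. -/
noncomputable def hpos : ℕ → ℕ → ℝ
  | 0, n => 1 / (n : ℝ)
  | r + 1, n => ∑ k ∈ Finset.Icc 1 n, hpos r k

/-- Hyperharmonic numbers of negative order: `hneg r n = h_n^(-r)` for `r ≥ 1`. -/
noncomputable def hneg (r n : ℕ) : ℝ :=
  if r < n then (-1 : ℝ) ^ r / (((n - r : ℕ) : ℝ) * (Nat.choose n r : ℝ))
  else ∑ k ∈ Finset.range n, (Nat.choose r k : ℝ) * (-1 : ℝ) ^ k / ((n - k : ℕ) : ℝ)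

/-- Hyperharmonic numbers of arbitrary integer order. -/
noncomputable def hh (r : ℤ) (n : ℕ) : ℝ :=
  if 0 ≤ r then hpos r.toNat n else hneg (-r).toNat n

/-- Riemann zeta value `ζ(k) = ∑_{n=1}^∞ 1/n^k`. -/
noncomputable def zetaVal (k : ℕ) : ℝ := ∑' n : ℕ, 1 / ((n : ℝ) + 1) ^ k

/-- Linear Euler sum `ζ_{H^(s)}(t) = ∑_{n=1}^∞ H_n^(s)/n^t`. -/
noncomputable def eulerSum (s t : ℕ) : ℝ := ∑' n : ℕ, Hgen s (n + 1) / ((n : ℝ) + 1) ^ t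

/-- The set of Riemann zeta values `ζ(k)`, `k ≥ 2`. -/
def zetaSet : Set ℝ := {x | ∃ k : ℕ, 2 ≤ k ∧ x = zetaVal k}

/-- The set of Riemann zeta values together with linear Euler sums. -/
def zetaEulerSet : Set ℝ :=
  zetaSet ∪ {x | ∃ s t : ℕ, 1 ≤ s ∧ 2 ≤ t ∧ x = eulerSum s t}

/-- Hurwitz zeta value `ζ(p,k) = ∑_{n=0}^∞ 1/(n+k)^p`. -/
noncomputable def hurwitzZetaVal (p k : ℕ) : ℝ := ∑' n : ℕ, 1 / ((n : ℝ) + (k : ℝ)) ^ p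

open Filter Topology

theorem hasSum_sub_add_of_antitone {f : ℕ → ℝ} (hf : Antitone f) (hlim : Tendsto f atTop (𝓝 0))
    (k : ℕ) : HasSum (fun n => f n - f (n + k)) (∑ j ∈ range k, f j) := by
  induction k with
  | zero => simp
  | succ k ih =>
    have htel : HasSum (fun n => f n - f (n + 1)) (f 0) := by
      rw [hasSum_iff_tendsto_nat_of_nonneg (fun n => sub_nonneg.2 (hf n.le_succ))]
      simp_rw [sum_range_sub']
      simpa using hlim.const_sub (f 0)
    have hstep : HasSum (fun n => f (n + k) - f (n + k + 1)) (f k) := by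
      have := (hasSum_nat_add_iff' k).2 htel
      rwa [sum_range_sub', sub_sub_cancel] at this
    simpa [sum_range_succ, ← add_assoc] using ih.add hstep

theorem hasSum_one_div_add_sub (a : ℝ) (ha : 0 < a) (k : ℕ) :
    HasSum (fun n : ℕ => 1 / ((n : ℝ) + a) - 1 / ((n : ℝ) + a + k))
      (∑ j ∈ range k, 1 / ((j : ℝ) + a)) := by
  have hanti : Antitone fun n : ℕ => 1 / ((n : ℝ) + a) := fun m n hmn =>
    one_div_le_one_div_of_le (by positivity) (by gcongr)
  have hlim : Tendsto (fun n : ℕ => 1 / ((n : ℝ) + a)) atTop (𝓝 0) :=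
    tendsto_const_nhds.div_atTop (tendsto_atTop_add_const_right _ _ tendsto_natCast_atTop_atTop)
  convert hasSum_sub_add_of_antitone hanti hlim k using 3
  push_cast; ring

theorem summable_one_div_add_pow {a : ℝ} (ha : 0 ≤ a) {p : ℕ} (hp : 2 ≤ p) :
    Summable fun n : ℕ => 1 / ((n : ℝ) + a) ^ p := by
  have := (Real.summable_one_div_nat_add_rpow a p).2 (by exact_mod_cast hp)
  refine this.congr fun n => ?_
  rw [abs_of_nonneg (by positivity), Real.rpow_natCast]

theorem sum_Icc_eq_add_sum_Icc_succ {M : Type*} [AddCommMonoid M] (g : ℕ → M) {a b : ℕ}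
    (hab : a ≤ b + 1) : ∑ j ∈ Icc a (b + 1), g j = g a + ∑ j ∈ Icc a b, g (j + 1) := by
  rw [Icc_eq_cons_Ioc hab, sum_cons, ← Finset.Icc_add_one_left_eq_Ioc, ← map_add_right_Icc,
    sum_map]
  rfl

theorem Hgen_eq_sum_range (r n : ℕ) : Hgen r n = ∑ k ∈ range n, 1 / ((k : ℝ) + 1) ^ r := by
  rw [Hgen, ← Finset.Ico_add_one_right_eq_Icc, sum_Ico_eq_sum_range]
  simp [add_comm]

theorem hasSum_one_div_succ_sub (i : ℕ) :
    HasSum (fun m : ℕ => 1 / ((m : ℝ) + 1) - 1 / ((m : ℝ) + 1 + i)) (Hgen 1 i) := by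
  simpa [Hgen_eq_sum_range] using hasSum_one_div_add_sub 1 one_pos i

theorem sum_range_one_div_add (a b : ℕ) :
    ∑ k ∈ range b, 1 / ((a : ℝ) + (k + 1))
      = Hgen 1 b + ∑ i ∈ Icc 1 a, (1 / ((b : ℝ) + i) - 1 / i) := by
  induction a with
  | zero => simp [Hgen_eq_sum_range]
  | succ a ih =>
    have hshift : ∑ k ∈ range b, 1 / ((a : ℝ) + (k + 1))
        = 1 / ((a : ℝ) + 1) + ∑ k ∈ range b, 1 / (((a + 1 : ℕ) : ℝ) + (k + 1))
          - 1 / ((a : ℝ) + (b + 1)) := by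
      rw [eq_sub_iff_add_eq, ← sum_range_succ (fun k => 1 / ((a : ℝ) + (k + 1))),
        sum_range_succ']
      push_cast
      ring_nf
    rw [sum_Icc_succ_top (by omega), ← add_assoc, ← ih, hshift]
    push_cast
    ring

theorem hasSum_zetaVal {p : ℕ} (hp : 2 ≤ p) :
    HasSum (fun n : ℕ => 1 / ((n : ℝ) + 1) ^ p) (zetaVal p) :=
  (summable_one_div_add_pow zero_le_one hp).hasSum

theorem hasSum_hurwitzZetaVal {p : ℕ} (hp : 2 ≤ p) (k : ℕ) :
    HasSum (fun n : ℕ => 1 / ((n : ℝ) + k) ^ p) (hurwitzZetaVal p k) :=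
  (summable_one_div_add_pow k.cast_nonneg hp).hasSum

theorem hurwitzZetaVal_le {p k : ℕ} (hp : 2 ≤ p) (hk : 1 ≤ k) :
    hurwitzZetaVal p k ≤ 2 / k := by
  have hk0 : (0 : ℝ) < k := by exact_mod_cast hk
  have htel := (hasSum_one_div_add_sub k hk0 1).mul_left 2
  rw [sum_range_one, Nat.cast_zero, zero_add, Nat.cast_one] at htel
  refine (hasSum_le (fun n => ?_) (hasSum_hurwitzZetaVal hp k) htel).trans_eq (by ring)
  set x : ℝ := n + k
  have hx : 1 ≤ x := by
    have : (1 : ℝ) ≤ k := by exact_mod_cast hk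
    linarith [n.cast_nonneg (α := ℝ)]
  calc 1 / x ^ p ≤ 1 / (x * (x + 1) / 2) :=
        one_div_le_one_div_of_le (by positivity) (by nlinarith [pow_le_pow_right₀ hx hp])
    _ = 2 * (1 / x - 1 / (x + 1)) := by field_simp; ring

noncomputable def shiftCorrection (p i : ℕ) : ℝ :=
  ∑ j ∈ Icc 2 (p - 1), (-1 : ℝ) ^ (j - 1) * zetaVal (p + 1 - j) / (i : ℝ) ^ j
    + (-1 : ℝ) ^ (p - 1) * Hgen 1 i / (i : ℝ) ^ p

theorem shiftCorrection_two (i : ℕ) : shiftCorrection 2 i = -1 / (i : ℝ) ^ 2 * Hgen 1 i := by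
  simp only [shiftCorrection, Nat.add_one_sub_one, Icc_eq_empty_of_lt one_lt_two, sum_empty,
    pow_one]
  ring

theorem shiftCorrection_succ {p : ℕ} (hp : 2 ≤ p) (i : ℕ) :
    shiftCorrection (p + 1) i
      = -1 / (i : ℝ) * shiftCorrection p i + -1 / (i : ℝ) ^ 2 * zetaVal p := by
  obtain ⟨n, rfl⟩ : ∃ n, p = n + 1 := ⟨p - 1, by omega⟩
  simp only [shiftCorrection, Nat.add_sub_cancel]
  rw [sum_Icc_eq_add_sum_Icc_succ _ hp, mul_add, mul_sum]
  have hterm : ∀ j ∈ Icc 2 n,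
      (-1 : ℝ) ^ (j + 1 - 1) * zetaVal (n + 1 + 1 + 1 - (j + 1)) / (i : ℝ) ^ (j + 1)
        = -1 / (i : ℝ) * ((-1) ^ (j - 1) * zetaVal (n + 1 + 1 - j) / (i : ℝ) ^ j) := by
    intro j hj
    obtain ⟨k, rfl⟩ : ∃ k, j = k + 1 := ⟨j - 1, by grind⟩
    simp only [Nat.add_sub_cancel, show n + 1 + 1 + 1 - (k + 1 + 1) = n + 1 + 1 - (k + 1) by omega]
    ring
  rw [sum_congr rfl hterm, show n + 1 + 1 + 1 - 2 = n + 1 by omega]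
  ring

theorem hasSum_shiftCorrection {p i : ℕ} (hp : 2 ≤ p) (hi : 1 ≤ i) :
    HasSum (fun m : ℕ => 1 / ((m : ℝ) + 1) ^ p * (1 / ((m : ℝ) + 1 + i) - 1 / i))
      (shiftCorrection p i) := by
  have hi0 : (0 : ℝ) < i := by exact_mod_cast hi
  induction p, hp using Nat.le_induction with
  | base =>
    rw [shiftCorrection_two]
    exact ((hasSum_one_div_succ_sub i).mul_left _).congr_fun fun m => by field_simp; ring
  | succ p hp ih =>
    rw [shiftCorrection_succ hp]
    exact ((ih.mul_left _).add ((hasSum_zetaVal hp).mul_left _)).congr_fun fun m => by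
      field_simp; ring

theorem sum_shiftCorrection (p r : ℕ) :
    ∑ i ∈ Icc 1 r, shiftCorrection p i
      = ∑ j ∈ Icc 2 (p - 1), (-1 : ℝ) ^ (j - 1) * zetaVal (p + 1 - j) * Hgen j r
        + (-1 : ℝ) ^ (p - 1) * ∑ i ∈ Icc 1 r, Hgen 1 i / (i : ℝ) ^ p := by
  simp only [shiftCorrection]
  rw [sum_add_distrib, sum_comm, mul_sum]
  congr 1
  · refine sum_congr rfl fun j _ => ?_
    rw [Hgen, mul_sum]
    exact sum_congr rfl fun i _ => by ring
  · exact sum_congr rfl fun i _ => by ring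

noncomputable def hurwitzArray (p r k m : ℕ) : ℝ :=
  if k ≤ m then 1 / (((m : ℝ) + 1) ^ p * ((r : ℝ) + ((k : ℝ) + 1))) else 0

theorem hurwitzArray_nonneg (p r k m : ℕ) : 0 ≤ hurwitzArray p r k m := by
  unfold hurwitzArray
  split_ifs <;> positivity

theorem hasSum_hurwitzArray_row {p : ℕ} (hp : 2 ≤ p) (r k : ℕ) :
    HasSum (hurwitzArray p r k) (hurwitzZetaVal p (k + 1) / ((r : ℝ) + ((k : ℝ) + 1))) := by
  have hzero : ∀ m ∈ range k, hurwitzArray p r k m = 0 := fun m hm =>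
    if_neg (by simpa using hm)
  rw [← hasSum_nat_add_iff' k, sum_eq_zero hzero, sub_zero]
  refine ((hasSum_hurwitzZetaVal hp (k + 1)).div_const _).congr_fun fun n => ?_
  rw [hurwitzArray, if_pos (by omega), div_div]
  push_cast
  ring

theorem hasSum_hurwitzArray_col (p r m : ℕ) :
    HasSum (fun k => hurwitzArray p r k m)
      (Hgen 1 (m + 1) / ((m : ℝ) + 1) ^ p
        + ∑ i ∈ Icc 1 r, 1 / ((m : ℝ) + 1) ^ p * (1 / ((m : ℝ) + 1 + i) - 1 / i)) := by
  have hsupp : ∀ k ∉ range (m + 1), hurwitzArray p r k m = 0 := fun k hk =>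
    if_neg (by simpa [Nat.lt_succ_iff] using hk)
  convert (hasSum_sum_of_ne_finset_zero hsupp : HasSum _ _) using 1
  symm
  have hterm : ∀ k ∈ range (m + 1),
      hurwitzArray p r k m = 1 / ((m : ℝ) + 1) ^ p * (1 / ((r : ℝ) + ((k : ℝ) + 1))) :=
    fun k hk => by
      rw [hurwitzArray, if_pos (Nat.lt_succ_iff.1 (mem_range.1 hk)), one_div_mul_one_div]
  rw [sum_congr rfl hterm, ← mul_sum, sum_range_one_div_add, mul_add, ← mul_sum]
  push_cast
  ring

theorem summable_uncurry_hurwitzArray {p : ℕ} (hp : 2 ≤ p) (r : ℕ) :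
    Summable (Function.uncurry (hurwitzArray p r)) := by
  refine (summable_prod_of_nonneg fun x => hurwitzArray_nonneg p r x.1 x.2).2
    ⟨fun k => (hasSum_hurwitzArray_row hp r k).summable, ?_⟩
  simp_rw [fun k => (hasSum_hurwitzArray_row hp r k).tsum_eq]
  refine Summable.of_nonneg_of_le
    (fun k => div_nonneg (tsum_nonneg fun n => by positivity) (by positivity)) (fun k => ?_)
    ((summable_one_div_add_pow zero_le_one le_rfl).mul_left 2)
  have hk : (0 : ℝ) < k + 1 := by positivity
  have hζ := hurwitzZetaVal_le hp (by omega : 1 ≤ k + 1)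
  push_cast at hζ
  calc hurwitzZetaVal p (k + 1) / ((r : ℝ) + ((k : ℝ) + 1))
      ≤ 2 / ((k : ℝ) + 1) / ((k : ℝ) + 1) :=
        div_le_div₀ (by positivity) hζ hk (by linarith [r.cast_nonneg (α := ℝ)])
    _ = 2 * (1 / ((k : ℝ) + 1) ^ 2) := by rw [div_div, ← sq, mul_one_div]

theorem hasSum_hurwitzZetaVal_div {p : ℕ} (hp : 2 ≤ p) (r : ℕ) :
    HasSum (fun k : ℕ => hurwitzZetaVal p (k + 1) / ((r : ℝ) + ((k : ℝ) + 1)))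
      (eulerSum 1 p + ∑ i ∈ Icc 1 r, shiftCorrection p i) := by
  have hA := (summable_uncurry_hurwitzArray hp r).hasSum
  have hrows := hA.prod_fiberwise fun k => hasSum_hurwitzArray_row hp r k
  have hcols := ((Equiv.prodComm ℕ ℕ).hasSum_iff.2 hA).prod_fiberwise
    fun m => hasSum_hurwitzArray_col p r m
  have hshift : HasSum
      (fun m : ℕ => ∑ i ∈ Icc 1 r, 1 / ((m : ℝ) + 1) ^ p * (1 / ((m : ℝ) + 1 + i) - 1 / i))
      (∑ i ∈ Icc 1 r, shiftCorrection p i) :=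
    hasSum_sum fun i hi => hasSum_shiftCorrection hp (mem_Icc.1 hi).1
  have heuler : eulerSum 1 p = ∑' x, Function.uncurry (hurwitzArray p r) x
      - ∑ i ∈ Icc 1 r, shiftCorrection p i := by
    simpa [eulerSum] using (hcols.sub hshift).tsum_eq
  rw [heuler, sub_add_cancel]
  exact hrows

theorem stmt10_general (p r : ℕ) (hp : 1 < p) :
    ∑' k : ℕ, hurwitzZetaVal p (k + 1) / ((r : ℝ) + ((k : ℝ) + 1)) =
      eulerSum 1 p +
      (∑ j ∈ Finset.Icc 2 (p - 1), (-1 : ℝ) ^ (j - 1) * zetaVal (p + 1 - j) * Hgen j r) +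
      (-1 : ℝ) ^ (p - 1) * ∑ j ∈ Finset.Icc 1 r, Hgen 1 j / (j : ℝ) ^ p := by
  rw [(hasSum_hurwitzZetaVal_div hp r).tsum_eq, sum_shiftCorrection, add_assoc]

theorem stmt10 (p r : ℕ) (hp : 1 < p) (hr : 1 ≤ r) :
    ∑' k : ℕ, hurwitzZetaVal p (k + 1) / ((r : ℝ) + ((k : ℝ) + 1)) =
      eulerSum 1 p +
      (∑ j ∈ Finset.Icc 2 (p - 1), (-1 : ℝ) ^ (j - 1) * zetaVal (p + 1 - j) * Hgen j r) +
      (-1 : ℝ) ^ (p - 1) * ∑ j ∈ Finset.Icc 1 r, Hgen 1 j / (j : ℝ) ^ p :=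
  stmt10_general p r hp
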